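/- arXiv:math/0409578 — 2 statements merged into one kernel-verified Lean document; each statement's English description precedes it below -/
import Mathlib

section
/- If an angle β̂ lies in a plane inclined at angle ν to a reference plane (measured via the normal direction), and β is its orthogonal projection onto the reference plane with the vertex on the axis, then tan(β/2) = (1/sin ν)·tan(β̂/2). -/
open Real

/-- The vector `(a, b, c)` of Euclidean `ℝ³`. -/
noncomputable def vec3 (a b c : ℝ) : EuclideanSpace ℝ (Fin 3) :=
  (WithLp.equiv 2 (Fin 3 → ℝ)).symm ![a, b, c]

/-- Orthogonal projection of a vector of `ℝ³` onto the horizontal reference plane. -/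
noncomputable def projHoriz (v : EuclideanSpace ℝ (Fin 3)) : EuclideanSpace ℝ (Fin 3) :=
  vec3 (v 0) (v 1) 0

lemma vec3_apply0 (a b c : ℝ) : vec3 a b c 0 = a := by simp [vec3]
lemma vec3_apply1 (a b c : ℝ) : vec3 a b c 1 = b := by simp [vec3]

lemma inner_vec3 (a b c a' b' c' : ℝ) :
    inner ℝ (vec3 a b c) (vec3 a' b' c') = a*a'+b*b'+c*c' := by
  simp [vec3, PiLp.inner_apply, Fin.sum_univ_three]; ring

lemma norm_vec3 (a b c : ℝ) : ‖vec3 a b c‖ = Real.sqrt (a^2+b^2+c^2) := by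
  simp [vec3, EuclideanSpace.norm_eq, Fin.sum_univ_three]

lemma smul_add_vec3 (x y a b c a' b' c' : ℝ) :
    x • vec3 a b c + y • vec3 a' b' c'
      = vec3 (x*a+y*a') (x*b+y*b') (x*c+y*c') := by
  simp [vec3]; ext i; fin_cases i <;> simp

lemma smul_sub_vec3 (x y a b c a' b' c' : ℝ) :
    x • vec3 a b c - y • vec3 a' b' c'
      = vec3 (x*a-y*a') (x*b-y*b') (x*c-y*c') := by
  simp [vec3]; ext i; fin_cases i <;> simp

lemma projHoriz_vec3 (a b c : ℝ) : projHoriz (vec3 a b c) = vec3 a b 0 := by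
  simp [projHoriz, vec3_apply0, vec3_apply1]

lemma angle_vec3_sym (a b : ℝ) (ha : 0 < a) (hb : 0 < b) :
    InnerProductGeometry.angle (vec3 a b 0) (vec3 a (-b) 0) = 2 * Real.arctan (b / a) := by
  have hden : (0:ℝ) < a^2 + b^2 := by positivity
  have hnorm : ‖vec3 a b 0‖ = Real.sqrt (a^2+b^2) := by rw [norm_vec3]; ring_nf
  have hnorm' : ‖vec3 a (-b) 0‖ = Real.sqrt (a^2+b^2) := by rw [norm_vec3]; ring_nf
  rw [InnerProductGeometry.angle, inner_vec3, hnorm, hnorm',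
    Real.mul_self_sqrt hden.le]
  have hx : (0:ℝ) < b / a := by positivity
  have harct : Real.arctan (b/a) < π/2 := Real.arctan_lt_pi_div_two _
  have harct0 : 0 < Real.arctan (b/a) := by
    have := Real.arctan_zero
    nlinarith [Real.arctan_strictMono hx]
  have h1 : (0:ℝ) < 1 + (b/a)^2 := by positivity
  have hcos : Real.cos (2 * Real.arctan (b/a)) = (a*a + b*(-b) + 0*0) / (a^2+b^2) := by
    rw [Real.cos_two_mul, Real.cos_arctan, div_pow, one_pow, Real.sq_sqrt h1.le]
    field_simp
    ring
  rw [← hcos, Real.arccos_cos (by linarith) (by linarith)]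

/-- **Projection formula for an angle in an inclined plane.**  Let `ν ∈ (0, π/2]` and
let `β̂ ∈ (0, π)` be an angle with vertex at the origin lying in the plane spanned by
`u = (sin ν, 0, −cos ν)` and `e₂ = (0,1,0)` (whose normal makes angle `π/2 − ν` with the
horizontal reference plane), positioned symmetrically about `u` so that its bisector
projects to the bisector of the projected angle.  If `β` is the angle between the
orthogonal projections of its two legs onto the reference plane, then the angle between
the two legs is `β̂` and `tan(β/2) = (1/sin ν)·tan(β̂/2)`. -/
theorem inclined_angle_projection (ν βhat : ℝ) (hν : ν ∈ Set.Ioc 0 (π / 2))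
    (hβ : βhat ∈ Set.Ioo 0 π) :
    InnerProductGeometry.angle
        (Real.cos (βhat / 2) • vec3 (Real.sin ν) 0 (-Real.cos ν)
          + Real.sin (βhat / 2) • vec3 0 1 0)
        (Real.cos (βhat / 2) • vec3 (Real.sin ν) 0 (-Real.cos ν)
          - Real.sin (βhat / 2) • vec3 0 1 0) = βhat ∧
    Real.tan (InnerProductGeometry.angle
        (projHoriz (Real.cos (βhat / 2) • vec3 (Real.sin ν) 0 (-Real.cos ν)
          + Real.sin (βhat / 2) • vec3 0 1 0))
        (projHoriz (Real.cos (βhat / 2) • vec3 (Real.sin ν) 0 (-Real.cos ν)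
          - Real.sin (βhat / 2) • vec3 0 1 0)) / 2)
      = (1 / Real.sin ν) * Real.tan (βhat / 2) := by
  obtain ⟨hν0, hν1⟩ := hν
  obtain ⟨hβ0, hβ1⟩ := hβ
  set c := Real.cos (βhat / 2) with hc
  set s := Real.sin (βhat / 2) with hs
  have hc0 : 0 < c := Real.cos_pos_of_mem_Ioo ⟨by linarith [Real.pi_pos], by linarith⟩
  have hs0 : 0 < s := Real.sin_pos_of_pos_of_lt_pi (by linarith) (by linarith)
  have hq0 : 0 < Real.sin ν := Real.sin_pos_of_pos_of_lt_pi hν0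
    (lt_of_le_of_lt hν1 (by linarith [Real.pi_pos]))
  have hcs : c^2 + s^2 = 1 := by
    rw [hc, hs]; rw [add_comm]; exact Real.sin_sq_add_cos_sq _
  have hvadd : c • vec3 (Real.sin ν) 0 (-Real.cos ν) + s • vec3 0 1 0
      = vec3 (c * Real.sin ν) s (-(c * Real.cos ν)) := by
    rw [smul_add_vec3]; ring_nf
  have hvsub : c • vec3 (Real.sin ν) 0 (-Real.cos ν) - s • vec3 0 1 0
      = vec3 (c * Real.sin ν) (-s) (-(c * Real.cos ν)) := by
    rw [smul_sub_vec3]; ring_nf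
  constructor
  · rw [hvadd, hvsub, InnerProductGeometry.angle, inner_vec3, norm_vec3, norm_vec3]
    have h1 : (c * Real.sin ν)^2 + s^2 + (-(c * Real.cos ν))^2 = 1 := by
      have := Real.sin_sq_add_cos_sq ν
      nlinarith [hcs]
    have h1' : (c * Real.sin ν)^2 + (-s)^2 + (-(c * Real.cos ν))^2 = 1 := by
      nlinarith [h1]
    rw [h1, h1', Real.sqrt_one, mul_one, div_one]
    have hinner : c * Real.sin ν * (c * Real.sin ν) + s * -s
        + -(c * Real.cos ν) * -(c * Real.cos ν) = Real.cos βhat := by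
      have h2 : Real.cos βhat = c^2 - s^2 := by
        have h2' := Real.cos_two_mul (βhat/2)
        rw [show 2*(βhat/2) = βhat by ring] at h2'
        nlinarith [hcs]
      have := Real.sin_sq_add_cos_sq ν
      nlinarith
    rw [hinner, Real.arccos_cos hβ0.le hβ1.le]
  · rw [hvadd, hvsub, projHoriz_vec3, projHoriz_vec3,
      angle_vec3_sym _ _ (by positivity) hs0]
    have ht : 2 * Real.arctan (s / (c * Real.sin ν)) / 2
        = Real.arctan (s / (c * Real.sin ν)) := by ring
    rw [ht, Real.tan_arctan]
    rw [Real.tan_eq_sin_div_cos, ← hc, ← hs]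
    field_simp
end

section
/- For the function β(z) = 2·arctan(c·tan(z/2)) with c = 1/sin ν and ν ∈ (0, π/2], β is a strictly increasing bijection from (0, π) to (0, π) with β(z) ≥ z for all z (equality iff ν = π/2 or at no interior point when ν < π/2), and the sum of the three projected angles of a triangle is at least the sum of the three inclined angles. -/
open Real Set

private lemma half_mem {z : ℝ} (hz : z ∈ Ioo (0 : ℝ) π) :
    0 < z / 2 ∧ z / 2 < π / 2 := ⟨by linarith [hz.1], by linarith [hz.2]⟩

private lemma tan_half_pos {z : ℝ} (hz : z ∈ Ioo (0 : ℝ) π) : 0 < Real.tan (z / 2) :=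
  Real.tan_pos_of_pos_of_lt_pi_div_two (half_mem hz).1 (half_mem hz).2

private lemma arctan_tan_half {z : ℝ} (hz : z ∈ Ioo (0 : ℝ) π) :
    Real.arctan (Real.tan (z / 2)) = z / 2 :=
  Real.arctan_tan (by linarith [(half_mem hz).1, Real.pi_pos]) (half_mem hz).2

/-- **Projection of angles from an inclined plane.**  For inclination `ν ∈ (0, π/2]` and
`c = 1/sin ν`, the map `β(z) = 2·arctan(c·tan(z/2))` is a strictly increasing bijection of
`(0, π)` onto itself with `β(z) ≥ z`; moreover `β(z) > z` at every interior point when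
`ν < π/2`, and `β = id` when `ν = π/2`.  Consequently the sum of the three projected
angles of a triangle is at least the sum of the three inclined angles. -/
theorem projection_monotone_bijective (ν c : ℝ) (hν : ν ∈ Ioc 0 (π / 2))
    (hc : c = 1 / Real.sin ν) :
    StrictMonoOn (fun z => 2 * Real.arctan (c * Real.tan (z / 2))) (Ioo 0 π) ∧
    Set.BijOn (fun z => 2 * Real.arctan (c * Real.tan (z / 2))) (Ioo 0 π) (Ioo 0 π) ∧
    (∀ z ∈ Ioo (0 : ℝ) π, z ≤ 2 * Real.arctan (c * Real.tan (z / 2))) ∧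
    (ν < π / 2 → ∀ z ∈ Ioo (0 : ℝ) π, z < 2 * Real.arctan (c * Real.tan (z / 2))) ∧
    (ν = π / 2 → ∀ z ∈ Ioo (0 : ℝ) π, 2 * Real.arctan (c * Real.tan (z / 2)) = z) ∧
    (∀ z₁ ∈ Ioo (0 : ℝ) π, ∀ z₂ ∈ Ioo (0 : ℝ) π, ∀ z₃ ∈ Ioo (0 : ℝ) π,
      z₁ + z₂ + z₃ ≤ 2 * Real.arctan (c * Real.tan (z₁ / 2))
        + 2 * Real.arctan (c * Real.tan (z₂ / 2))
        + 2 * Real.arctan (c * Real.tan (z₃ / 2))) := by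
  have hsin : 0 < Real.sin ν := Real.sin_pos_of_pos_of_lt_pi hν.1
    (lt_of_le_of_lt hν.2 (by linarith [Real.pi_pos]))
  have hsin1 : Real.sin ν ≤ 1 := Real.sin_le_one ν
  have hc1 : 1 ≤ c := by
    rw [hc]; rw [le_div_iff₀ hsin]; linarith
  have hcpos : 0 < c := by linarith
  -- strict monotonicity
  have hmono : StrictMonoOn (fun z => 2 * Real.arctan (c * Real.tan (z / 2))) (Ioo 0 π) := by
    intro x hx y hy hxy
    have htan : Real.tan (x / 2) < Real.tan (y / 2) := by
      apply Real.strictMonoOn_tan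
      · exact ⟨by linarith [(half_mem hx).1, Real.pi_pos], (half_mem hx).2⟩
      · exact ⟨by linarith [(half_mem hy).1, Real.pi_pos], (half_mem hy).2⟩
      · linarith
    have : c * Real.tan (x / 2) < c * Real.tan (y / 2) :=
      mul_lt_mul_of_pos_left htan hcpos
    have := Real.arctan_strictMono this
    simpa using by linarith
  -- β(z) ≥ z and strict versions
  have hge : ∀ z ∈ Ioo (0 : ℝ) π, z ≤ 2 * Real.arctan (c * Real.tan (z / 2)) := by
    intro z hz
    have ht := tan_half_pos hz
    have h1 : Real.tan (z / 2) ≤ c * Real.tan (z / 2) := by nlinarith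
    have := Real.arctan_strictMono.monotone h1
    rw [arctan_tan_half hz] at this
    linarith
  have hgt : 1 < c → ∀ z ∈ Ioo (0 : ℝ) π, z < 2 * Real.arctan (c * Real.tan (z / 2)) := by
    intro hcg z hz
    have ht := tan_half_pos hz
    have h1 : Real.tan (z / 2) < c * Real.tan (z / 2) := by nlinarith
    have := Real.arctan_strictMono h1
    rw [arctan_tan_half hz] at this
    linarith
  -- maps into
  have hmaps : Set.MapsTo (fun z => 2 * Real.arctan (c * Real.tan (z / 2)))
      (Ioo 0 π) (Ioo 0 π) := by
    intro z hz
    have ht := tan_half_pos hz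
    have hpos : 0 < Real.arctan (c * Real.tan (z / 2)) :=
      Real.arctan_zero ▸ Real.arctan_strictMono (by positivity)
    have hlt : Real.arctan (c * Real.tan (z / 2)) < π / 2 := Real.arctan_lt_pi_div_two _
    exact ⟨by show 0 < 2 * Real.arctan (c * Real.tan (z / 2)); linarith, by simpa using by linarith⟩
  -- surjectivity
  have hsurj : Set.SurjOn (fun z => 2 * Real.arctan (c * Real.tan (z / 2)))
      (Ioo 0 π) (Ioo 0 π) := by
    intro w hw
    refine ⟨2 * Real.arctan (Real.tan (w / 2) / c), ?_, ?_⟩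
    · have ht := tan_half_pos hw
      have hpos : 0 < Real.arctan (Real.tan (w / 2) / c) :=
        Real.arctan_zero ▸ Real.arctan_strictMono (by positivity)
      have hlt : Real.arctan (Real.tan (w / 2) / c) < π / 2 := Real.arctan_lt_pi_div_two _
      exact ⟨by linarith, by linarith⟩
    · simp only
      rw [mul_div_cancel_left₀ _ (two_ne_zero), Real.tan_arctan,
        mul_div_cancel₀ _ (ne_of_gt hcpos), arctan_tan_half hw]
      ring
  refine ⟨hmono, ⟨hmaps, hmono.injOn, hsurj⟩, hge, ?_, ?_, ?_⟩
  · intro hνlt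
    apply hgt
    have : Real.sin ν < 1 := by
      have := Real.sin_lt_sin_of_lt_of_le_pi_div_two (x := ν) (y := π / 2)
        (by linarith [hν.1, Real.pi_pos]) le_rfl hνlt
      simpa using this
    rw [hc]; rw [lt_div_iff₀ hsin]; linarith
  · intro hν2
    intro z hz
    have : c = 1 := by rw [hc, hν2, Real.sin_pi_div_two]; norm_num
    rw [this, one_mul, arctan_tan_half hz]; ring
  · intro z₁ h₁ z₂ h₂ z₃ h₃
    have := hge z₁ h₁; have := hge z₂ h₂; have := hge z₃ h₃
    linarith
end
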